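/- arXiv:0907.0650 — 4 statements merged into one kernel-verified Lean document; each statement's English description precedes it below -/
import Mathlib

section
/- Let H be a bounded non-negative self-adjoint operator and L a bounded operator on a separable Hilbert space such that L*L ≤ H. Then the Hilbert dimension of the closure of the range of L is at most the Hilbert dimension of the closure of the range of H. -/
/-!
For `x` with `H x = 0`, `0 ≤ re ⟪(H - L† L) x, x⟫ = -‖L x‖²`, so `ker H ≤ ker L`. As `H` is
self-adjoint, `ker H` is the orthogonal complement of `K = closure (range H)`, hence
`range L = L(K)`. The closure of the image of `K` under a bounded map is no larger than `K`: if
`K` is finite-dimensional the image is closed of dimension at most `dim K`; otherwise `K` has an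
infinite Hilbert basis, into which the countable Hilbert basis of the separable target injects.
-/

open ContinuousLinearMap

section
variable {𝕜 E F : Type*} [RCLike 𝕜] [NormedAddCommGroup E] [InnerProductSpace 𝕜 E]
  [NormedAddCommGroup F] [InnerProductSpace 𝕜 F]

theorem ContinuousLinearMap.ker_le_ker_of_isPositive_sub_adjoint_comp_self [CompleteSpace E]
    [CompleteSpace F] {H : E →L[𝕜] E} {L : E →L[𝕜] F} (h : (H - adjoint L ∘L L).IsPositive) :
    LinearMap.ker (H : E →ₗ[𝕜] E) ≤ LinearMap.ker (L : E →ₗ[𝕜] F) := by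
  intro x hx
  rw [LinearMap.mem_ker, coe_coe] at hx ⊢
  have hLx : 0 ≤ -‖L x‖ ^ 2 := by
    simpa [hx, adjoint_inner_left, ← inner_self_eq_norm_sq] using h.re_inner_nonneg_left x
  exact norm_eq_zero.mp (by nlinarith [norm_nonneg (L x)])

theorem LinearMap.range_eq_map_of_orthogonal_le_ker {K : Submodule 𝕜 E}
    [K.HasOrthogonalProjection] {T : E →ₗ[𝕜] F} (h : Kᗮ ≤ LinearMap.ker T) :
    LinearMap.range T = K.map T := by
  refine le_antisymm ?_ LinearMap.map_le_range
  rintro _ ⟨x, rfl⟩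
  obtain ⟨y, hy, z, hz, rfl⟩ := K.exists_add_mem_mem_orthogonal x
  exact ⟨y, hy, by simp [LinearMap.mem_ker.mp (h hz)]⟩

theorem Orthonormal.one_le_dist {ι : Type*} {v : ι → E} (hv : Orthonormal 𝕜 v) {i j : ι}
    (hij : i ≠ j) : 1 ≤ dist (v i) (v j) := by
  have h : ‖v i - v j‖ ^ 2 = 2 := by
    rw [@norm_sub_sq 𝕜, hv.1, hv.1, hv.2 hij]
    norm_num
  rw [dist_eq_norm]
  nlinarith [norm_nonneg (v i - v j)]

theorem Orthonormal.countable [TopologicalSpace.SeparableSpace E] {ι : Type*} {v : ι → E}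
    (hv : Orthonormal 𝕜 v) : Countable ι :=
  Pairwise.countable_of_isOpen_disjoint (s := fun i ↦ Metric.ball (v i) (1 / 2))
    (fun _ _ hij ↦ Metric.ball_disjoint_ball (by linarith [hv.one_le_dist hij]))
    (fun _ ↦ Metric.isOpen_ball) (fun _ ↦ Metric.nonempty_ball.2 (by norm_num))

theorem HilbertBasis.nonempty_linearIsometry [CompleteSpace F] {ι κ : Type*}
    (b : HilbertBasis ι 𝕜 E) {v : κ → F} (hv : Orthonormal 𝕜 v) (f : ι ↪ κ) :
    Nonempty (E →ₗᵢ[𝕜] F) :=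
  ⟨(hv.comp f f.injective).orthogonalFamily.linearIsometry.comp b.repr.toLinearIsometry⟩

theorem nonempty_linearIsometry_of_finrank_le [FiniteDimensional 𝕜 E] [FiniteDimensional 𝕜 F]
    (h : Module.finrank 𝕜 E ≤ Module.finrank 𝕜 F) : Nonempty (E →ₗᵢ[𝕜] F) :=
  have : CompleteSpace E := FiniteDimensional.complete 𝕜 E
  have : CompleteSpace F := FiniteDimensional.complete 𝕜 F
  (stdOrthonormalBasis 𝕜 E).toHilbertBasis.nonempty_linearIsometry
    (stdOrthonormalBasis 𝕜 F).orthonormal (Fin.castLEEmb h)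

theorem nonempty_linearIsometry_of_not_finiteDimensional [CompleteSpace E]
    [TopologicalSpace.SeparableSpace E] [CompleteSpace F] (hF : ¬ FiniteDimensional 𝕜 F) :
    Nonempty (E →ₗᵢ[𝕜] F) := by
  obtain ⟨w, b, -⟩ := exists_hilbertBasis 𝕜 E
  obtain ⟨w', b', -⟩ := exists_hilbertBasis 𝕜 F
  have : Countable w := b.orthonormal.countable
  have : Infinite w' := by
    refine not_finite_iff_infinite.mp fun _ ↦ hF ?_
    have := Fintype.ofFinite w'
    exact Module.Finite.of_basis b'.toOrthonormalBasis.toBasis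
  obtain ⟨g, hg⟩ := Countable.exists_injective_nat w
  exact b.nonempty_linearIsometry b'.orthonormal
    ((⟨g, hg⟩ : w ↪ ℕ).trans (Infinite.natEmbedding w'))

theorem Submodule.nonempty_linearIsometry_topologicalClosure_map [CompleteSpace E]
    [TopologicalSpace.SeparableSpace E] (K : Submodule 𝕜 F) [CompleteSpace K] (T : F →L[𝕜] E) :
    Nonempty ((K.map (T : F →ₗ[𝕜] E)).topologicalClosure →ₗᵢ[𝕜] K) := by
  by_cases hK : FiniteDimensional 𝕜 K
  · rw [(K.map (T : F →ₗ[𝕜] E)).closed_of_finiteDimensional.submodule_topologicalClosure_eq]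
    exact nonempty_linearIsometry_of_finrank_le (K.finrank_map_le _)
  · have : CompleteSpace (K.map (T : F →ₗ[𝕜] E)).topologicalClosure :=
      (Submodule.isClosed_topologicalClosure _).completeSpace_coe
    exact nonempty_linearIsometry_of_not_finiteDimensional hK

end

/-- If `H` is a bounded non-negative self-adjoint operator and `L` a bounded
operator on a separable complex Hilbert space with `L*L ≤ H` (i.e. `H - L*L` is a positive
operator), then the Hilbert dimension of the closure of the range of `L` is at most that of the
closure of the range of `H`; equivalently, there is a linear isometric embedding of the first
closed subspace into the second. -/
theorem stmt1 {𝓗 : Type*} [NormedAddCommGroup 𝓗] [InnerProductSpace ℂ 𝓗]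
    [CompleteSpace 𝓗] [TopologicalSpace.SeparableSpace 𝓗]
    (H L : 𝓗 →L[ℂ] 𝓗) (hH : H.IsPositive)
    (hLH : (H - (ContinuousLinearMap.adjoint L) ∘L L).IsPositive) :
    Nonempty ((Submodule.topologicalClosure (LinearMap.range (L : 𝓗 →ₗ[ℂ] 𝓗))) →ₗᵢ[ℂ]
      (Submodule.topologicalClosure (LinearMap.range (H : 𝓗 →ₗ[ℂ] 𝓗)))) := by
  set K := (LinearMap.range (H : 𝓗 →ₗ[ℂ] 𝓗)).topologicalClosure
  have : CompleteSpace K := (Submodule.isClosed_topologicalClosure _).completeSpace_coe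
  have hK : Kᗮ ≤ LinearMap.ker (L : 𝓗 →ₗ[ℂ] 𝓗) := by
    rw [Submodule.orthogonal_closure, hH.isSymmetric.orthogonal_range]
    exact ker_le_ker_of_isPositive_sub_adjoint_comp_self hLH
  rw [LinearMap.range_eq_map_of_orthogonal_le_ker hK]
  exact K.nonempty_linearIsometry_topologicalClosure_map L
end

section
/- For any sequence of Borel sets δ_k ⊆ ℝ (k ∈ ℕ), the absolutely continuous closure of the union ⋃_k δ_k equals the topological closure of the union ⋃_k cl_ac(δ_k). -/
open MeasureTheory Set Filter
open scoped ENNReal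

/-- The absolutely continuous closure of a set `δ ⊆ ℝ`. -/
noncomputable def acClosure (δ : Set ℝ) : Set ℝ :=
  {x : ℝ | ∀ ε > 0, 0 < volume (Ioo (x - ε) (x + ε) ∩ δ)}

lemma acClosure_mono {s t : Set ℝ} (h : s ⊆ t) : acClosure s ⊆ acClosure t := by
  intro x hx ε hε
  exact lt_of_lt_of_le (hx ε hε) (measure_mono (inter_subset_inter_right _ h))

lemma isClosed_acClosure (δ : Set ℝ) : IsClosed (acClosure δ) := by
  rw [← isOpen_compl_iff, Metric.isOpen_iff]
  intro x hx
  simp only [mem_compl_iff, acClosure, mem_setOf_eq, not_forall, not_lt, nonpos_iff_eq_zero] at hx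
  obtain ⟨ε, hε, h0⟩ := hx
  refine ⟨ε / 2, by linarith, fun y hy => ?_⟩
  rw [Metric.mem_ball, Real.dist_eq, abs_lt] at hy
  simp only [mem_compl_iff, acClosure, mem_setOf_eq, not_forall, not_lt, nonpos_iff_eq_zero]
  refine ⟨ε / 2, by linarith, measure_mono_null ?_ h0⟩
  apply inter_subset_inter_left
  intro z hz
  simp only [mem_Ioo] at hz ⊢
  constructor <;> linarith [hz.1, hz.2]

lemma ae_mem_acClosure {δ : Set ℝ} (hδ : MeasurableSet δ) :
    volume (δ \ acClosure δ) = 0 := by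
  have h := Besicovitch.ae_tendsto_measure_inter_div volume δ
  rw [ae_restrict_iff' hδ] at h
  rw [← nonpos_iff_eq_zero]
  calc volume (δ \ acClosure δ)
      ≤ volume {x | ¬ (x ∈ δ → Tendsto
          (fun r => volume (δ ∩ Metric.closedBall x r) / volume (Metric.closedBall x r))
          (nhdsWithin 0 (Ioi 0)) (nhds 1))} := by
        apply measure_mono
        intro x hx
        simp only [mem_setOf_eq, _root_.not_imp]
        refine ⟨hx.1, fun htend => hx.2 ?_⟩
        -- x is a density point, show x ∈ acClosure δ
        intro ε hε
        have h2 : (1/2 : ℝ≥0∞) < 1 := by norm_num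
        have hev := (htend.eventually (lt_mem_nhds h2)).and
          (Ioo_mem_nhdsGT_of_mem (⟨le_refl (0:ℝ), hε⟩ : (0:ℝ) ∈ Ico 0 ε))
        obtain ⟨r, hr1, hr2⟩ := hev.exists
        have hpos : 0 < volume (δ ∩ Metric.closedBall x r) := by
          by_contra hc
          rw [not_lt, nonpos_iff_eq_zero] at hc
          simp [hc] at hr1
        calc (0:ℝ≥0∞) < volume (δ ∩ Metric.closedBall x r) := hpos
          _ ≤ volume (Ioo (x - ε) (x + ε) ∩ δ) := by
              apply measure_mono
              intro z hz
              have := hz.2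
              rw [Metric.mem_closedBall, Real.dist_eq, abs_le] at this
              refine ⟨?_, hz.1⟩
              simp only [mem_Ioo]
              constructor <;> [linarith [this.1, hr2.1, hr2.2]; linarith [this.2, hr2.1, hr2.2]]
    _ = 0 := ae_iff.mp h

/-- For any sequence of Borel sets `δ_k ⊆ ℝ`, the absolutely continuous
closure of `⋃ k, δ_k` equals the topological closure of `⋃ k, cl_ac(δ_k)`. -/
theorem stmt4 (δ : ℕ → Set ℝ) (hδ : ∀ k, MeasurableSet (δ k)) :
    acClosure (⋃ k, δ k) = closure (⋃ k, acClosure (δ k)) := by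
  apply Subset.antisymm
  · -- forward inclusion
    intro x hx
    rw [Metric.mem_closure_iff]
    intro ε hε
    have hpos : 0 < volume (Ioo (x - ε) (x + ε) ∩ ⋃ k, δ k) := hx ε hε
    rw [inter_iUnion] at hpos
    have : ∃ k, volume (Ioo (x - ε) (x + ε) ∩ δ k) ≠ 0 := by
      by_contra hc
      push_neg at hc
      rw [measure_iUnion_null hc] at hpos
      exact lt_irrefl _ hpos
    obtain ⟨k, hk⟩ := this
    have hsub : Ioo (x - ε) (x + ε) ∩ δ k ⊆
        (Ioo (x - ε) (x + ε) ∩ δ k ∩ acClosure (δ k)) ∪ (δ k \ acClosure (δ k)) := by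
      intro z hz
      by_cases hz2 : z ∈ acClosure (δ k)
      · exact Or.inl ⟨hz, hz2⟩
      · exact Or.inr ⟨hz.2, hz2⟩
    have hne : volume (Ioo (x - ε) (x + ε) ∩ δ k ∩ acClosure (δ k)) ≠ 0 := by
      intro h0
      apply hk
      rw [← nonpos_iff_eq_zero]
      calc volume (Ioo (x - ε) (x + ε) ∩ δ k)
          ≤ volume ((Ioo (x - ε) (x + ε) ∩ δ k ∩ acClosure (δ k)) ∪ (δ k \ acClosure (δ k))) :=
            measure_mono hsub
        _ ≤ _ + _ := measure_union_le _ _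
        _ = 0 := by rw [h0, ae_mem_acClosure (hδ k), add_zero]
    obtain ⟨y, hy⟩ := nonempty_of_measure_ne_zero hne
    refine ⟨y, mem_iUnion.2 ⟨k, hy.2⟩, ?_⟩
    have := hy.1.1
    rw [mem_Ioo] at this
    rw [Real.dist_eq, abs_lt]
    constructor <;> linarith [this.1, this.2]
  · -- reverse inclusion
    apply closure_minimal
    · exact iUnion_subset fun k => acClosure_mono (subset_iUnion δ k)
    · exact isClosed_acClosure _
end

section
/- For all real λ ≥ 0, t ∈ ℝ and y ∈ (0, 1], one has |√(t + iy − λ)| / Im √(i − λ) ≤ 2^{3/4}·(1 + t²)^{1/4}. -/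
/-!
With `S = √(1 + λ²)`, the principal root satisfies `Im √(i − λ) = √((S + λ)/2) ≥ √(S/2)` for
`λ ≥ 0`, while `|√(t + iy − λ)| = |t + iy − λ|^{1/2}` and
`|t + iy − λ|² ≤ (t − λ)² + 1 ≤ 2 (1 + t²)(1 + λ²) = 2 (1 + t²) S²`. Dividing, the quotient is at most
`(2 √(2 (1 + t²)))^{1/2} = 2^{3/4} (1 + t²)^{1/4}`.
-/

open Complex

namespace Complex

lemma norm_cpow_one_half (z : ℂ) : ‖z ^ (1 / 2 : ℂ)‖ = √‖z‖ := by
  rw [Real.sqrt_eq_rpow, ← norm_cpow_real]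
  norm_num

lemma im_cpow_one_half {z : ℂ} (hz : 0 ≤ z.im) :
    (z ^ (1 / 2 : ℂ)).im = √((‖z‖ - z.re) / 2) := by
  rw [one_div, cpow_inv_two_im_eq_sqrt hz]

lemma norm_I_sub_ofReal (l : ℝ) : ‖I - l‖ = √(1 + l ^ 2) := by
  rw [norm_def, normSq_apply]
  congr 1
  simp only [sub_re, I_re, ofReal_re, zero_sub, sub_im, I_im, ofReal_im, sub_zero]
  ring

lemma im_cpow_one_half_I_sub_ofReal (l : ℝ) :
    ((I - l) ^ (1 / 2 : ℂ)).im = √((√(1 + l ^ 2) + l) / 2) := by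
  rw [im_cpow_one_half (by simp), norm_I_sub_ofReal, sub_re, I_re, ofReal_re, zero_sub,
    sub_neg_eq_add]

lemma norm_ofReal_add_I_mul_sub_le (t y l : ℝ) (hy : |y| ≤ 1) :
    ‖(t : ℂ) + I * y - l‖ ≤ √(2 * (1 + t ^ 2)) * √(1 + l ^ 2) := by
  rw [norm_def, ← Real.sqrt_mul (by positivity)]
  refine Real.sqrt_le_sqrt ?_
  have hy2 : y ^ 2 ≤ 1 := by nlinarith [abs_nonneg y, sq_abs y]
  simp only [normSq_apply, sub_re, add_re, ofReal_re, mul_re, I_re, zero_mul, I_im, ofReal_im,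
    mul_zero, sub_self, add_zero, sub_im, add_im, mul_im, one_mul, zero_add, sub_zero]
  -- `2 (1 + t²)(1 + l²) - (t - l)² - 1 = (t + l)² + 2 (t l)²`
  nlinarith [sq_nonneg (t + l), sq_nonneg (t * l)]

end Complex

lemma Real.two_rpow_three_quarters_mul_rpow_quarter {x : ℝ} (hx : 0 ≤ x) :
    (2 : ℝ) ^ (3 / 4 : ℝ) * x ^ (1 / 4 : ℝ) = √(2 * √(2 * x)) := by
  rw [Real.sqrt_eq_rpow, Real.sqrt_eq_rpow, Real.mul_rpow (by norm_num) hx,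
    Real.mul_rpow (by norm_num) (by positivity), Real.mul_rpow (by positivity) (by positivity),
    ← Real.rpow_mul hx, ← Real.rpow_mul (by norm_num), ← mul_assoc, ← Real.rpow_add (by norm_num)]
  norm_num

/-- For all real `λ ≥ 0`, `t ∈ ℝ` and `y ∈ (0, 1]`, one has
`|√(t + iy − λ)| / Im √(i − λ) ≤ 2^{3/4} (1 + t²)^{1/4}`, where `√` denotes the principal
branch of the complex square root. -/
theorem stmt9 (l t y : ℝ) (hl : 0 ≤ l) (hy : y ∈ Set.Ioc (0 : ℝ) 1) :
    ‖((t : ℂ) + Complex.I * y - l) ^ ((1 : ℂ) / 2)‖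
        / ((Complex.I - (l : ℂ)) ^ ((1 : ℂ) / 2)).im
      ≤ (2 : ℝ) ^ ((3 : ℝ) / 4) * (1 + t ^ 2) ^ ((1 : ℝ) / 4) := by
  obtain ⟨hy0, hy1⟩ := hy
  set S := √(1 + l ^ 2)
  set T := √(2 * (1 + t ^ 2))
  have hnum : ‖(t : ℂ) + I * y - l‖ ≤ T * S :=
    norm_ofReal_add_I_mul_sub_le t y l (abs_le.2 ⟨by linarith, hy1⟩)
  have hden : 0 < (S + l) / 2 := by positivity
  rw [norm_cpow_one_half, im_cpow_one_half_I_sub_ofReal,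
    Real.two_rpow_three_quarters_mul_rpow_quarter (by positivity), ← Real.sqrt_div' _ hden.le]
  refine Real.sqrt_le_sqrt ?_
  rw [div_le_iff₀ hden]
  calc ‖(t : ℂ) + I * y - l‖ ≤ T * S := hnum
    _ ≤ T * (S + l) := by gcongr; linarith
    _ = 2 * T * ((S + l) / 2) := by ring
end

section
/- For all real λ ≥ 0, t ∈ ℝ and y ∈ (0, 1], one has |(√(t + iy − λ) − Re √(i − λ)) / Im √(i − λ)| ≤ 2·(1 + t²)^{1/4}. -/
/-!
Write `w = √(i - λ)`. The half-angle formulas give `2 (Re w)² = |i - λ| - λ ≤ 1` and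
`2 (Im w)² = |i - λ| + λ ≥ 1 + λ`. Since `Re √z ≥ 0` and `Re w ≥ 0`, the cross term in
`|√z - Re w|²` is nonpositive, so `|√z - Re w|² ≤ |z| + (Re w)² ≤ |t| + λ + 3/2` for
`z = t + iy - λ`, and this is at most `2 √(1 + t²) (1 + λ) ≤ 4 √(1 + t²) (Im w)²`.
-/

open Complex

namespace Complex

lemma two_mul_sq_re_cpow_inv_two (x : ℂ) : 2 * (x ^ (2⁻¹ : ℂ)).re ^ 2 = ‖x‖ + x.re := by
  rw [cpow_inv_two_re, Real.sq_sqrt (by linarith [neg_abs_le x.re, abs_re_le_norm x])]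
  ring

lemma two_mul_sq_im_cpow_inv_two (x : ℂ) : 2 * (x ^ (2⁻¹ : ℂ)).im ^ 2 = ‖x‖ - x.re := by
  rw [← sq_abs, abs_cpow_inv_two_im,
    Real.sq_sqrt (by linarith [le_abs_self x.re, abs_re_le_norm x])]
  ring

lemma norm_cpow_inv_two_sq (x : ℂ) : ‖x ^ (2⁻¹ : ℂ)‖ ^ 2 = ‖x‖ := by
  conv_rhs => rw [← cpow_nat_inv_pow x two_ne_zero]
  rw [norm_pow, Nat.cast_ofNat]

lemma norm_sub_ofReal_sq_le {s : ℂ} (hs : 0 ≤ s.re) {a : ℝ} (ha : 0 ≤ a) :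
    ‖s - a‖ ^ 2 ≤ ‖s‖ ^ 2 + a ^ 2 := by
  rw [Complex.sq_norm, Complex.sq_norm, normSq_apply, normSq_apply]
  simp only [sub_re, ofReal_re, sub_im, ofReal_im, sub_zero]
  nlinarith [mul_nonneg hs ha]

lemma one_add_le_two_mul_sq_im_cpow_inv_two_I_sub (l : ℝ) :
    1 + l ≤ 2 * ((I - l) ^ (2⁻¹ : ℂ)).im ^ 2 := by
  have h := abs_im_le_norm (I - l)
  simp only [sub_im, I_im, ofReal_im, sub_zero, abs_one] at h
  rw [two_mul_sq_im_cpow_inv_two]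
  simp only [sub_re, I_re, ofReal_re, zero_sub]
  linarith

lemma two_mul_sq_re_cpow_inv_two_I_sub_le_one {l : ℝ} (hl : 0 ≤ l) :
    2 * ((I - l) ^ (2⁻¹ : ℂ)).re ^ 2 ≤ 1 := by
  have h : ‖I - l‖ ≤ 1 + l := by
    simpa [abs_of_nonneg hl] using norm_sub_le I (l : ℂ)
  rw [two_mul_sq_re_cpow_inv_two]
  simp only [sub_re, I_re, ofReal_re, zero_sub]
  linarith

end Complex

lemma Real.rpow_one_div_four_sq {x : ℝ} (hx : 0 ≤ x) : (x ^ ((1 : ℝ) / 4)) ^ 2 = √x := by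
  rw [Real.sqrt_eq_rpow, ← Real.rpow_natCast, ← Real.rpow_mul hx]
  norm_num

lemma abs_add_three_halves_le_two_mul_sqrt (t : ℝ) : |t| + 3 / 2 ≤ 2 * √(1 + t ^ 2) := by
  rw [← Real.sqrt_sq (by positivity : (0 : ℝ) ≤ |t| + 3 / 2),
    ← Real.sqrt_sq (by norm_num : (0 : ℝ) ≤ 2),
    ← Real.sqrt_mul (by norm_num)]
  gcongr
  nlinarith [sq_abs t, sq_nonneg (|t| - 1 / 2)]

/-- For all real `λ ≥ 0`, `t ∈ ℝ` and `y ∈ (0, 1]`, one has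
`|(√(t + iy − λ) − Re √(i − λ)) / Im √(i − λ)| ≤ 2 (1 + t²)^{1/4}`, where `√` denotes the
principal branch of the complex square root. -/
theorem stmt10 (l t y : ℝ) (hl : 0 ≤ l) (hy : y ∈ Set.Ioc (0 : ℝ) 1) :
    ‖(((t : ℂ) + Complex.I * y - l) ^ ((1 : ℂ) / 2)
          - (((Complex.I - (l : ℂ)) ^ ((1 : ℂ) / 2)).re : ℂ))
        / ((((Complex.I - (l : ℂ)) ^ ((1 : ℂ) / 2)).im : ℂ))‖
      ≤ 2 * (1 + t ^ 2) ^ ((1 : ℝ) / 4) := by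
  have hb := one_add_le_two_mul_sq_im_cpow_inv_two_I_sub l
  have ha := two_mul_sq_re_cpow_inv_two_I_sub_le_one hl
  set z : ℂ := (t : ℂ) + I * y - l
  set w : ℂ := (I - l) ^ (2⁻¹ : ℂ)
  set A : ℝ := (1 + t ^ 2) ^ ((1 : ℝ) / 4)
  have hz : ‖z‖ ≤ |t| + l + 1 := calc
    ‖z‖ ≤ |z.re| + |z.im| := norm_le_abs_re_add_abs_im z
    _ = |t - l| + y := by simp [z, abs_of_pos hy.1]
    _ ≤ |t| + l + 1 := by linarith [abs_sub t l, abs_of_nonneg hl, hy.2]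
  have hA : A ^ 2 = √(1 + t ^ 2) := Real.rpow_one_div_four_sq (by positivity)
  have key : ‖z ^ (2⁻¹ : ℂ) - w.re‖ ^ 2 ≤ (2 * A * |w.im|) ^ 2 := calc
    _ ≤ ‖z‖ + w.re ^ 2 := by
      rw [← norm_cpow_inv_two_sq z]
      exact norm_sub_ofReal_sq_le (cpow_inv_two_re z ▸ Real.sqrt_nonneg _)
        (cpow_inv_two_re _ ▸ Real.sqrt_nonneg _)
    _ ≤ 2 * √(1 + t ^ 2) * (1 + l) := by
      nlinarith [abs_add_three_halves_le_two_mul_sqrt t,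
        Real.one_le_sqrt.2 (by nlinarith : 1 ≤ 1 + t ^ 2)]
    _ ≤ 2 * √(1 + t ^ 2) * (2 * w.im ^ 2) := by gcongr
    _ = (2 * A * |w.im|) ^ 2 := by rw [mul_pow, mul_pow, sq_abs, hA]; ring
  have hw : 0 < |w.im| := abs_pos.2 fun h => by simp [h] at hb; linarith
  rw [one_div, norm_div, norm_real, Real.norm_eq_abs, div_le_iff₀ hw]
  exact (pow_le_pow_iff_left₀ (norm_nonneg _) (by positivity) two_ne_zero).1 key
end
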